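/- arXiv:1711.07585 — 2 statements merged into one kernel-verified Lean document; each statement's English description precedes it below -/
import Mathlib

section
/- Let {E_k : k = 1,...,n} be positive semidefinite operators on ℂ^d, each of rank at most one, such that the map sending each pure state ρ to its outcome probability vector (tr(ρ E_1),...,tr(ρ E_n)) is injective on the set of pure states. Suppose moreover there is a subset B ⊆ {1,...,n} with ∑_{k∈B} E_k = I. Let G = ∑_{k=1}^n E_k (which is positive definite) and set F_k = G^{-1/2} E_k G^{-1/2}. Then {F_k : k = 1,...,n} is a POVM whose elements each have rank at most one, and the map sending each pure state ρ to (tr(ρ F_1),...,tr(ρ F_n)) is injective on the set of pure states (i.e., {F_k} is a rank-1 PSIR-complete POVM). -/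
/-!
`G = ∑ k, E k` dominates `∑ k ∈ B, E k = 1`, so it is positive definite; with `T = G^{-1/2}`
the matrices `F k = T * E k * T` are positive semidefinite of rank at most one and sum to
`T * G * T = 1`. Since `tr(|φ⟩⟨φ| T E T) = tr(|Tφ⟩⟨Tφ| E)`, the statistics of `φ` under `F` are
those of the unnormalized vector `Tφ` under `E`. Summing them over `B` recovers `‖Tφ‖²`, so `Tφ`
and `Tψ` can be normalized by a common scalar, PSIR-completeness of `E` identifies their pure
states, and invertibility of `T` carries this back to `φ` and `ψ`.
-/

open Matrix BigOperators ComplexOrder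

/-- The pure state (rank-one projection) `|φ⟩⟨φ|` associated to a vector `φ`,
as a matrix with entries `φ i * conj (φ j)`. -/
noncomputable def pureState {d : ℕ} (φ : Fin d → ℂ) : Matrix (Fin d) (Fin d) ℂ :=
  Matrix.vecMulVec φ (star φ)

/-- `φ` is a unit vector. -/
def IsUnitVec {d : ℕ} (φ : Fin d → ℂ) : Prop := star φ ⬝ᵥ φ = 1

/-- The positive semidefinite square root of a positive semidefinite matrix
(the definition `Matrix.PosSemidef.sqrt` of the older Mathlib, since removed). -/
noncomputable def Matrix.PosSemidef.sqrt {n 𝕜 : Type*} [Fintype n] [DecidableEq n] [RCLike 𝕜]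
    {A : Matrix n n 𝕜} (hA : A.PosSemidef) : Matrix n n 𝕜 :=
  hA.1.eigenvectorUnitary.1 * diagonal ((↑) ∘ (√·) ∘ hA.1.eigenvalues) *
  (star hA.1.eigenvectorUnitary : Matrix n n 𝕜)

namespace Matrix.PosSemidef

variable {n 𝕜 : Type*} [Fintype n] [DecidableEq n] [RCLike 𝕜] {A : Matrix n n 𝕜}

open scoped MatrixOrder in
lemma sqrt_eq_cfcSqrt (hA : A.PosSemidef) : hA.sqrt = CFC.sqrt A := by
  rw [CFC.sqrt_eq_cfc, cfc_nnreal_eq_real _ A, hA.1.cfc_eq]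
  simp [Matrix.PosSemidef.sqrt, Matrix.IsHermitian.cfc, Unitary.conjStarAlgAut_apply,
    Function.comp_def, hA.eigenvalues_nonneg]

open scoped MatrixOrder in
lemma posSemidef_sqrt (hA : A.PosSemidef) : hA.sqrt.PosSemidef :=
  hA.sqrt_eq_cfcSqrt ▸ (CFC.sqrt_nonneg A).posSemidef

open scoped MatrixOrder in
lemma sqrt_mul_self (hA : A.PosSemidef) : hA.sqrt * hA.sqrt = A :=
  hA.sqrt_eq_cfcSqrt ▸ CFC.sqrt_mul_sqrt_self A hA.nonneg

lemma isUnit_det_sqrt (hA : A.PosSemidef) (hdet : IsUnit A.det) : IsUnit hA.sqrt.det :=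
  isUnit_of_mul_isUnit_left (det_mul hA.sqrt hA.sqrt ▸ hA.sqrt_mul_self ▸ hdet)

lemma sqrt_inv_mul_self_mul_sqrt_inv (hA : A.PosSemidef) (hdet : IsUnit A.det) :
    hA.sqrt⁻¹ * A * hA.sqrt⁻¹ = 1 := by
  have hS := hA.isUnit_det_sqrt hdet
  calc hA.sqrt⁻¹ * A * hA.sqrt⁻¹ = hA.sqrt⁻¹ * (hA.sqrt * hA.sqrt) * hA.sqrt⁻¹ := by
        rw [hA.sqrt_mul_self]
    _ = 1 := by rw [← mul_assoc, nonsing_inv_mul _ hS, one_mul, mul_nonsing_inv _ hS]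

end Matrix.PosSemidef

lemma Matrix.posDef_sum_of_sum_eq_one {n ι 𝕜 : Type*} [Fintype n] [DecidableEq n] [RCLike 𝕜]
    [Fintype ι] {E : ι → Matrix n n 𝕜} (hE : ∀ k, (E k).PosSemidef) {B : Finset ι}
    (hB : ∑ k ∈ B, E k = 1) : (∑ k, E k).PosDef := by
  classical
  rw [← Finset.sum_add_sum_compl B E, hB]
  exact PosDef.one.add_posSemidef (posSemidef_sum _ fun k _ => hE k)

section PureState

variable {d : ℕ}

lemma trace_pureState (φ : Fin d → ℂ) : (pureState φ).trace = φ ⬝ᵥ star φ :=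
  trace_vecMulVec φ (star φ)

lemma mul_pureState_mul_conjTranspose (M : Matrix (Fin d) (Fin d) ℂ) (φ : Fin d → ℂ) :
    M * pureState φ * Mᴴ = pureState (M *ᵥ φ) := by
  rw [pureState, pureState, mul_vecMulVec, vecMulVec_mul, star_mulVec]

lemma trace_pureState_mul_conj (φ : Fin d → ℂ) (T M : Matrix (Fin d) (Fin d) ℂ) :
    (pureState φ * (Tᴴ * M * T)).trace = (pureState (T *ᵥ φ) * M).trace := by
  rw [← mul_pureState_mul_conjTranspose, ← mul_assoc, ← mul_assoc, trace_mul_comm, ← mul_assoc,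
    ← mul_assoc]

lemma pureState_smul (c : ℂ) (φ : Fin d → ℂ) :
    pureState (c • φ) = (c * star c) • pureState φ := by
  rw [pureState, pureState, star_smul, smul_vecMulVec, vecMulVec_smul, smul_smul]

lemma pureState_mulVec_inj {T : Matrix (Fin d) (Fin d) ℂ} (hT : IsUnit T.det) {φ ψ : Fin d → ℂ} :
    pureState (T *ᵥ φ) = pureState (T *ᵥ ψ) ↔ pureState φ = pureState ψ := by
  refine ⟨fun h => ?_, fun h => ?_⟩
  · have := congrArg (fun ρ => T⁻¹ * ρ * T⁻¹ᴴ) h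
    simpa only [mul_pureState_mul_conjTranspose, mulVec_mulVec, nonsing_inv_mul _ hT,
      one_mulVec] using this
  · rw [← mul_pureState_mul_conjTranspose, h, mul_pureState_mul_conjTranspose]

lemma isUnitVec_smul_iff (c : ℂ) (φ : Fin d → ℂ) :
    IsUnitVec (c • φ) ↔ c * star c * (φ ⬝ᵥ star φ) = 1 := by
  rw [IsUnitVec, dotProduct_comm, star_smul, smul_dotProduct, dotProduct_smul, smul_eq_mul,
    smul_eq_mul, mul_assoc]

lemma exists_isUnitVec_smul {φ : Fin d → ℂ} (hφ : φ ≠ 0) :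
    ∃ c : ℂ, c ≠ 0 ∧ IsUnitVec (c • φ) := by
  obtain ⟨hre, him⟩ := Complex.pos_iff.mp (dotProduct_self_star_pos_iff.mpr hφ)
  obtain ⟨r, hr, hφr⟩ : ∃ r : ℝ, 0 < r ∧ φ ⬝ᵥ star φ = r :=
    ⟨_, hre, Complex.ext (by simp) (by simp [← him])⟩
  refine ⟨((√r)⁻¹ : ℝ), Complex.ofReal_ne_zero.mpr (inv_ne_zero (Real.sqrt_ne_zero'.mpr hr)), ?_⟩
  rw [isUnitVec_smul_iff, hφr, Complex.star_def, Complex.conj_ofReal, ← Complex.ofReal_mul,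
    ← Complex.ofReal_mul, Complex.ofReal_eq_one, ← mul_inv, Real.mul_self_sqrt hr.le,
    inv_mul_cancel₀ hr.ne']

end PureState

/-- PSIR-completeness of the family `E`. -/
def DistinguishesPureStates {d : ℕ} {ι : Type*} (E : ι → Matrix (Fin d) (Fin d) ℂ) : Prop :=
  ∀ φ ψ : Fin d → ℂ, IsUnitVec φ → IsUnitVec ψ →
    (∀ k, (pureState φ * E k).trace = (pureState ψ * E k).trace) → pureState φ = pureState ψ

namespace DistinguishesPureStates

variable {d : ℕ} {ι : Type*} {E : ι → Matrix (Fin d) (Fin d) ℂ}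

/-- Since `∑ k ∈ B, E k = 1`, the data fix `‖v‖ = ‖w‖`, so `v` and `w` can be normalized by a
common scalar. -/
lemma pureState_eq_of_trace_eq (hE : DistinguishesPureStates E) {B : Finset ι}
    (hB : ∑ k ∈ B, E k = 1) {v w : Fin d → ℂ}
    (h : ∀ k, (pureState v * E k).trace = (pureState w * E k).trace) :
    pureState v = pureState w := by
  have hnorm : v ⬝ᵥ star v = w ⬝ᵥ star w := by
    have := Finset.sum_congr rfl fun k (_ : k ∈ B) => h k
    simpa only [← trace_sum, ← Finset.mul_sum, hB, mul_one, trace_pureState] using this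
  rcases eq_or_ne v 0 with rfl | hv
  · rw [zero_dotProduct, eq_comm, dotProduct_self_star_eq_zero] at hnorm
    rw [hnorm]
  obtain ⟨c, hc, hcv⟩ := exists_isUnitVec_smul hv
  have hcw : IsUnitVec (c • w) := by rwa [isUnitVec_smul_iff, ← hnorm, ← isUnitVec_smul_iff]
  refine smul_right_injective _ (mul_ne_zero hc (star_ne_zero.mpr hc)) ?_
  simp only [← pureState_smul]
  refine hE _ _ hcv hcw fun k => ?_
  rw [pureState_smul, pureState_smul, smul_mul_assoc, smul_mul_assoc, trace_smul, trace_smul, h k]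

lemma conj (hE : DistinguishesPureStates E) {B : Finset ι} (hB : ∑ k ∈ B, E k = 1)
    {T : Matrix (Fin d) (Fin d) ℂ} (hT : IsUnit T.det) :
    DistinguishesPureStates fun k => Tᴴ * E k * T := by
  intro φ ψ _ _ h
  refine (pureState_mulVec_inj hT).mp (hE.pureState_eq_of_trace_eq hB fun k => ?_)
  simpa only [trace_pureState_mul_conj] using h k

end DistinguishesPureStates

theorem stmt_0 {d n : ℕ} (E : Fin n → Matrix (Fin d) (Fin d) ℂ)
    (hpsd : ∀ k, (E k).PosSemidef) (hrank : ∀ k, (E k).rank ≤ 1)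
    (hinj : ∀ φ ψ : Fin d → ℂ, IsUnitVec φ → IsUnitVec ψ →
      (∀ k, (pureState φ * E k).trace = (pureState ψ * E k).trace) →
      pureState φ = pureState ψ)
    (B : Finset (Fin n)) (hB : ∑ k ∈ B, E k = 1) :
    (∑ k, E k).PosDef ∧
    ∀ hG : (∑ k, E k).PosSemidef,
      (∀ k, (hG.sqrt⁻¹ * E k * hG.sqrt⁻¹).PosSemidef) ∧
      (∀ k, (hG.sqrt⁻¹ * E k * hG.sqrt⁻¹).rank ≤ 1) ∧
      (∑ k, hG.sqrt⁻¹ * E k * hG.sqrt⁻¹ = 1) ∧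
      (∀ φ ψ : Fin d → ℂ, IsUnitVec φ → IsUnitVec ψ →
        (∀ k, (pureState φ * (hG.sqrt⁻¹ * E k * hG.sqrt⁻¹)).trace =
              (pureState ψ * (hG.sqrt⁻¹ * E k * hG.sqrt⁻¹)).trace) →
        pureState φ = pureState ψ) := by
  have hGpd := Matrix.posDef_sum_of_sum_eq_one hpsd hB
  have hdet : IsUnit (∑ k, E k).det := (isUnit_iff_isUnit_det _).mp hGpd.isUnit
  refine ⟨hGpd, fun hG => ?_⟩
  set T := hG.sqrt⁻¹
  have hT : IsUnit T.det := isUnit_nonsing_inv_det _ (hG.isUnit_det_sqrt hdet)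
  have hTH : Tᴴ = T := hG.posSemidef_sqrt.isHermitian.inv
  refine ⟨fun k => ?_, fun k => ?_, ?_, ?_⟩
  · simpa only [hTH] using (hpsd k).conjTranspose_mul_mul_same T
  · exact (rank_mul_le_left _ _).trans ((rank_mul_le_right _ _).trans (hrank k))
  · rw [← Finset.sum_mul, ← Finset.mul_sum]
    exact hG.sqrt_inv_mul_self_mul_sqrt_inv hdet
  · have hF := DistinguishesPureStates.conj (E := E) hinj hB hT
    rwa [hTH] at hF
end

section
/- Let d ≥ 1, fix an index j ∈ {0,...,d−1}, and let φ, ψ ∈ ℂ^d be unit vectors with φ(j) ≠ 0. Suppose that (i) |φ(s)| = |ψ(s)| for every s ∈ {0,...,d−1}, (ii) |φ(j) + φ(s)|² = |ψ(j) + ψ(s)|² for every s ≠ j, and (iii) |φ(j) − i·φ(s)|² = |ψ(j) − i·ψ(s)|² for every s ≠ j. Then there exists a complex number c with |c| = 1 such that ψ = c·φ; equivalently, |φ⟩⟨φ| = |ψ⟩⟨ψ|. (Conditions (i)–(iii) say that φ and ψ give the same outcome probabilities for the d + 2(d−1) = 3d−2 rank-one operators E_s = |s⟩⟨s|, F_s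 = (|j⟩+|s⟩)(⟨j|+⟨s|), and G_s = (|j⟩+i|s⟩)(⟨j|−i⟨s|).) -/
open Matrix BigOperators ComplexOrder

/-!
Since `‖a + b‖² = ‖a‖² + ‖b‖² + 2 Re (conj a * b)` and `‖a - I * b‖² = ‖a‖² + ‖b‖² + 2 Im (conj a * b)`,
the measured probabilities determine every product `conj (φ j) * φ s`. As `φ j ≠ 0`, these products
determine `φ` up to the phase of `φ j`.
-/

open ComplexConjugate

namespace Complex

theorem conj_mul_eq_polarization (a b : ℂ) :
    conj a * b = ((‖a + b‖ ^ 2 - ‖a‖ ^ 2 - ‖b‖ ^ 2 : ℝ)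
      + (‖a - I * b‖ ^ 2 - ‖a‖ ^ 2 - ‖b‖ ^ 2 : ℝ) * I) / 2 := by
  simp only [Complex.sq_norm, normSq_apply]
  apply Complex.ext <;>
    simp only [mul_re, mul_im, conj_re, conj_im, add_re, add_im, sub_re, sub_im, I_re, I_im,
      ofReal_sub, ofReal_add, ofReal_mul, ofReal_re, ofReal_im, div_ofNat_re, div_ofNat_im] <;>
    ring

theorem conj_mul_eq_of_sq_norm_eq {a b a' b' : ℂ} (ha : ‖a‖ = ‖a'‖) (hb : ‖b‖ = ‖b'‖)
    (hadd : ‖a + b‖ ^ 2 = ‖a' + b'‖ ^ 2) (hsub : ‖a - I * b‖ ^ 2 = ‖a' - I * b'‖ ^ 2) :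
    conj a * b = conj a' * b' := by
  rw [conj_mul_eq_polarization, conj_mul_eq_polarization, ha, hb, hadd, hsub]

end Complex

theorem exists_norm_eq_one_smul_eq_of_conj_mul_eq {ι : Type*} {φ ψ : ι → ℂ} {j : ι}
    (hj : φ j ≠ 0) (h : ∀ s, conj (φ j) * φ s = conj (ψ j) * ψ s) :
    ∃ c : ℂ, ‖c‖ = 1 ∧ ψ = c • φ := by
  have hnorm : ‖φ j‖ = ‖ψ j‖ := by
    have := congrArg norm (h j)
    simpa [Complex.conj_mul', sq, mul_self_inj (norm_nonneg _) (norm_nonneg _)] using this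
  have hconj : conj (φ j) ≠ 0 := by simpa using hj
  refine ⟨ψ j / φ j, by rw [norm_div, hnorm, div_self (hnorm ▸ norm_ne_zero_iff.2 hj)], ?_⟩
  funext s
  have hs : conj (φ j) * (φ j * ψ s) = conj (φ j) * (ψ j * φ s) := by
    linear_combination ψ s * h j - ψ j * h s
  simp only [Pi.smul_apply, smul_eq_mul]
  rw [div_mul_eq_mul_div, eq_div_iff hj, mul_comm, ← mul_left_cancel₀ hconj hs]

theorem stmt_13_general {d : ℕ} (j : Fin d) (φ ψ : Fin d → ℂ)
    (hj : φ j ≠ 0)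
    (h1 : ∀ s : Fin d, ‖φ s‖ = ‖ψ s‖)
    (h2 : ∀ s : Fin d, s ≠ j →
      (‖φ j + φ s‖) ^ 2 = (‖ψ j + ψ s‖) ^ 2)
    (h3 : ∀ s : Fin d, s ≠ j →
      (‖φ j - Complex.I * φ s‖) ^ 2 = (‖ψ j - Complex.I * ψ s‖) ^ 2) :
    ∃ c : ℂ, ‖c‖ = 1 ∧ ψ = c • φ := by
  refine exists_norm_eq_one_smul_eq_of_conj_mul_eq hj fun s => ?_
  rcases eq_or_ne s j with rfl | hs
  · rw [Complex.conj_mul', Complex.conj_mul', h1]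
  · exact Complex.conj_mul_eq_of_sq_norm_eq (h1 j) (h1 s) (h2 s hs) (h3 s hs)

theorem stmt_13 {d : ℕ} (j : Fin d) (φ ψ : Fin d → ℂ)
    (hφ : IsUnitVec φ) (hψ : IsUnitVec ψ) (hj : φ j ≠ 0)
    (h1 : ∀ s : Fin d, ‖φ s‖ = ‖ψ s‖)
    (h2 : ∀ s : Fin d, s ≠ j →
      (‖φ j + φ s‖) ^ 2 = (‖ψ j + ψ s‖) ^ 2)
    (h3 : ∀ s : Fin d, s ≠ j →
      (‖φ j - Complex.I * φ s‖) ^ 2 = (‖ψ j - Complex.I * ψ s‖) ^ 2) :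
    ∃ c : ℂ, ‖c‖ = 1 ∧ ψ = c • φ :=
  stmt_13_general j φ ψ hj h1 h2 h3
end
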